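/- arXiv:2005.00855 — 2 statements merged into one kernel-verified Lean document; each statement's English description precedes it below -/
import Mathlib

section
/- For all Lie polynomials P₁, P₂ ∈ ℚ⟨X⟩, the right-normed bracketing map r satisfies r([P₁, P₂]) = [P₁, r(P₂)] + [r(P₁), P₂]. -/
/-!
Setting: `ℚ⟨X⟩ = FreeAlgebra ℚ X`, the free associative `ℚ`-algebra on a type `X` of
non-commuting variables, with the commutator bracket `⁅P,Q⁆ = P*Q - Q*P` and canonical
inclusion `ι = FreeAlgebra.ι ℚ`.  The words (elements of `FreeMonoid X`) form a `ℚ`-basis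
`FreeAlgebra.basisFreeMonoid ℚ X` of `ℚ⟨X⟩`.
-/

/-- The right-normed bracketing of a word:
`[ι x₁,[ι x₂,[…,[ι x_{n−1}, ι xₙ]…]]]`, with the empty word mapped to `0`. -/
noncomputable def rword {X : Type*} : List X → FreeAlgebra ℚ X
  | [] => 0
  | [x] => FreeAlgebra.ι ℚ x
  | x :: y :: ys => ⁅FreeAlgebra.ι ℚ x, rword (y :: ys)⁆

/-- The right-normed bracketing map `r : ℚ⟨X⟩ → ℚ⟨X⟩`: the unique `ℚ`-linear map sending the
basis word `w₁w₂⋯wₙ` to `[ι w₁,[ι w₂,[…,[ι w_{n−1}, ι wₙ]…]]]` (and the empty word `1` to `0`,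
and a single letter `x` to `ι x`). -/
noncomputable def rmap (X : Type*) : FreeAlgebra ℚ X →ₗ[ℚ] FreeAlgebra ℚ X :=
  (FreeAlgebra.basisFreeMonoid ℚ X).constr ℚ fun w => rword w.toList

/-- The coefficient of the word `w` in `P`, with respect to the basis of words of `ℚ⟨X⟩`. -/
noncomputable def coeffWord {X : Type*} (P : FreeAlgebra ℚ X) (w : FreeMonoid X) : ℚ :=
  (FreeAlgebra.basisFreeMonoid ℚ X).repr P w

attribute [local instance 100] LieRing.ofAssociativeRing

/-- `P` is a Lie polynomial: it belongs to the Lie subalgebra of `ℚ⟨X⟩` (under the commutator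
bracket) generated by the image of `ι`, i.e. the smallest `ℚ`-subspace of `ℚ⟨X⟩` containing
`ι(X)` and closed under commutators. -/
def IsLiePolynomial {X : Type*} (P : FreeAlgebra ℚ X) : Prop :=
  P ∈ LieSubalgebra.lieSpan ℚ (FreeAlgebra ℚ X) (Set.range (FreeAlgebra.ι ℚ))

/-- `P` is homogeneous of degree `n`: a `ℚ`-linear combination of words of length `n`. -/
def IsHomogeneous {X : Type*} (n : ℕ) (P : FreeAlgebra ℚ X) : Prop :=
  P ∈ Submodule.span ℚ
    ((fun w : List X => (w.map (FreeAlgebra.ι ℚ)).prod) '' {w : List X | w.length = n})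

/-!
Let `adLift : ℚ⟨X⟩ → End ℚ⟨X⟩` be the algebra map extending `x ↦ ad (ι x)`, and `ε` the
augmentation `algebraMapInv`. Splitting a word `uv` with `v` nonempty gives
`r(uv) = adLift(u) (r v)`, so bilinearly `r(PQ) = adLift(P) (r Q) + ε(Q) r(P)`.
On Lie polynomials `adLift` agrees with `ad` (both are Lie algebra maps agreeing on generators)
and `ε` vanishes, so `r(P₁P₂ - P₂P₁) = [P₁, r P₂] - [P₂, r P₁]`.
-/

open FreeAlgebra

section Words

variable {R X : Type*} [CommSemiring R]

theorem FreeAlgebra.basisFreeMonoid_apply (w : FreeMonoid X) :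
    basisFreeMonoid R X w = (w.toList.map (ι R)).prod := by
  rw [basisFreeMonoid, Module.Basis.map_apply, Finsupp.coe_basisSingleOne, ← FreeMonoid.lift_apply]
  change equivMonoidAlgebraFreeMonoid.symm (MonoidAlgebra.single w 1) = _
  simp [equivMonoidAlgebraFreeMonoid]

theorem FreeAlgebra.basisFreeMonoid_mul (u v : FreeMonoid X) :
    basisFreeMonoid R X u * basisFreeMonoid R X v = basisFreeMonoid R X (u * v) := by
  simp only [basisFreeMonoid_apply, FreeMonoid.toList_mul, List.map_append, List.prod_append]

theorem FreeAlgebra.algebraMapInv_prod_ι {l : List X} (hl : l ≠ []) :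
    algebraMapInv (l.map (ι R)).prod = 0 := by
  obtain ⟨x, l, rfl⟩ := List.exists_cons_of_ne_nil hl
  simp [algebraMapInv]

end Words

section RightNormed

variable {X : Type*}

noncomputable def adLift (X : Type*) : FreeAlgebra ℚ X →ₐ[ℚ] Module.End ℚ (FreeAlgebra ℚ X) :=
  lift ℚ fun x => LieAlgebra.ad ℚ (FreeAlgebra ℚ X) (ι ℚ x)

theorem adLift_ι (x : X) (P : FreeAlgebra ℚ X) : adLift X (ι ℚ x) P = ⁅ι ℚ x, P⁆ := by
  simp [adLift]

theorem rword_cons {l : List X} (hl : l ≠ []) (x : X) : rword (x :: l) = ⁅ι ℚ x, rword l⁆ := by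
  obtain ⟨y, l, rfl⟩ := List.exists_cons_of_ne_nil hl
  rfl

theorem rword_append (a : List X) {b : List X} (hb : b ≠ []) :
    rword (a ++ b) = adLift X (a.map (ι ℚ)).prod (rword b) := by
  induction a with
  | nil => simp
  | cons x a ih =>
    rw [List.cons_append, rword_cons (by simp [hb]), ih, List.map_cons, List.prod_cons, map_mul,
      Module.End.mul_apply, adLift_ι]

theorem rmap_basisFreeMonoid (w : FreeMonoid X) :
    rmap X (basisFreeMonoid ℚ X w) = rword w.toList :=
  Module.Basis.constr_basis _ _ _ _

theorem rmap_basisFreeMonoid_mul (u v : FreeMonoid X) :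
    rmap X (basisFreeMonoid ℚ X u * basisFreeMonoid ℚ X v)
      = adLift X (basisFreeMonoid ℚ X u) (rmap X (basisFreeMonoid ℚ X v))
        + algebraMapInv (basisFreeMonoid ℚ X v) • rmap X (basisFreeMonoid ℚ X u) := by
  rw [basisFreeMonoid_mul, rmap_basisFreeMonoid, rmap_basisFreeMonoid, rmap_basisFreeMonoid,
    FreeMonoid.toList_mul]
  by_cases hv : v.toList = []
  · simp [basisFreeMonoid_apply, hv, rword]
  · rw [rword_append _ hv, basisFreeMonoid_apply v, algebraMapInv_prod_ι hv, zero_smul, add_zero,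
      basisFreeMonoid_apply u]

theorem rmap_mul (P Q : FreeAlgebra ℚ X) :
    rmap X (P * Q) = adLift X P (rmap X Q) + algebraMapInv Q • rmap X P := by
  have := LinearMap.ext_basis (basisFreeMonoid ℚ X) (basisFreeMonoid ℚ X)
    (B := (LinearMap.mul ℚ (FreeAlgebra ℚ X)).compr₂ (rmap X))
    (B' := LinearMap.id.compl₁₂ (adLift X).toLinearMap (rmap X)
      + (LinearMap.lsmul ℚ _).flip.compl₁₂ (rmap X) algebraMapInv.toLinearMap)
    (fun u v => by simpa using rmap_basisFreeMonoid_mul u v)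
  simpa using LinearMap.congr_fun₂ this P Q

end RightNormed

section LiePolynomial

variable {X : Type*} {P : FreeAlgebra ℚ X}

theorem IsLiePolynomial.adLift_eq (hP : IsLiePolynomial P) :
    adLift X P = LieAlgebra.ad ℚ (FreeAlgebra ℚ X) P := by
  induction hP using LieSubalgebra.lieSpan_induction with
  | mem _ h => obtain ⟨x, rfl⟩ := h; ext; simp [adLift]
  | zero => simp
  | add _ _ _ _ ha hb => simp [ha, hb]
  | smul _ _ _ ha => simp [ha]
  | lie _ _ _ _ ha hb =>
    rw [← (adLift X).toLieHom_apply, LieHom.map_lie, (adLift X).toLieHom_apply,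
      (adLift X).toLieHom_apply, ha, hb, LieHom.map_lie]

theorem IsLiePolynomial.algebraMapInv_eq_zero (hP : IsLiePolynomial P) :
    algebraMapInv P = 0 := by
  induction hP using LieSubalgebra.lieSpan_induction with
  | mem _ h => obtain ⟨x, rfl⟩ := h; simp [algebraMapInv]
  | zero => simp
  | add _ _ _ _ ha hb => simp [ha, hb]
  | smul _ _ _ ha => simp [ha]
  | lie _ _ _ _ _ _ => rw [Ring.lie_def, map_sub, map_mul, map_mul, mul_comm, sub_self]

end LiePolynomial

/-- For Lie polynomials `P₁, P₂`: `r([P₁,P₂]) = [P₁, r(P₂)] + [r(P₁), P₂]`. -/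
theorem stmt_3 {X : Type*} (P₁ P₂ : FreeAlgebra ℚ X)
    (h₁ : IsLiePolynomial P₁) (h₂ : IsLiePolynomial P₂) :
    rmap X ⁅P₁, P₂⁆ = ⁅P₁, rmap X P₂⁆ + ⁅rmap X P₁, P₂⁆ := by
  rw [Ring.lie_def, map_sub, rmap_mul, rmap_mul, h₁.algebraMapInv_eq_zero,
    h₂.algebraMapInv_eq_zero, zero_smul, zero_smul, add_zero, add_zero, h₁.adLift_eq,
    h₂.adLift_eq, LieAlgebra.ad_apply, LieAlgebra.ad_apply, ← lie_skew P₂, sub_neg_eq_add]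
end

section
/- Let a ∈ X and let P₁, P₂ ∈ ℚ⟨X⟩ be two polynomials, each of whose coefficient of the word a^k is zero for every k ≥ 0. If [ι a, P₁] = [ι a, P₂], then P₁ = P₂ (uniqueness of solutions of bracket equations [ι a, ·] = Q among polynomials with no a-power terms). -/
attribute [local instance 100] LieRing.ofAssociativeRing

/-!
If `f` commutes with the letter `a`, comparing coefficients of `a * f = f * a` at `a w a` gives
`f(w a) = f(a w)`, and at `a u x` with `x ≠ a` gives `f(u x) = 0`. Every word that is not a
power of `a` is `u x aⁿ` with `x ≠ a`; rotating the trailing `a`s to the front turns it into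
`aⁿ u x`, so its coefficient vanishes. Hence `P₁ - P₂` is a polynomial in `a` alone, and it has
no `a`-power terms.
-/

open MonoidAlgebra FreeMonoid

theorem List.eq_replicate_or_eq_concat_append_replicate {X : Type*} (a : X) (l : List X) :
    (∃ n, l = List.replicate n a) ∨
      ∃ u x n, x ≠ a ∧ l = u ++ [x] ++ List.replicate n a := by
  induction l using List.reverseRecOn with
  | nil => exact .inl ⟨0, rfl⟩
  | append_singleton l y ih =>
    by_cases hy : y = a
    · subst hy
      rcases ih with ⟨n, rfl⟩ | ⟨u, x, n, hx, rfl⟩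
      · exact .inl ⟨n + 1, List.replicate_succ'.symm⟩
      · exact .inr ⟨u, x, n + 1, hx, by simp [List.replicate_succ']⟩
    · exact .inr ⟨l, y, 0, hy, by simp⟩

namespace MonoidAlgebra

variable {R X : Type*} [Semiring R] {a : X} {f : R[FreeMonoid X]}

theorem coeff_mul_of_eq_coeff_of_mul (hf : Commute (single (FreeMonoid.of a) 1) f)
    (w : FreeMonoid X) :
    f.coeff (w * FreeMonoid.of a) = f.coeff (FreeMonoid.of a * w) :=
  calc f.coeff (w * FreeMonoid.of a)
      _ = (single (FreeMonoid.of a) 1 * f).coeff (FreeMonoid.of a * (w * FreeMonoid.of a)) := by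
        rw [coeff_single_mul_mul, one_mul]
      _ = (f * single (FreeMonoid.of a) 1).coeff (FreeMonoid.of a * w * FreeMonoid.of a) := by
        rw [hf.eq, mul_assoc]
      _ = f.coeff (FreeMonoid.of a * w) := by rw [coeff_mul_single_mul, mul_one]

theorem coeff_ofList_concat_eq_zero (hf : Commute (single (FreeMonoid.of a) 1) f) {x : X}
    (hx : x ≠ a) (u : List X) : f.coeff (ofList (u ++ [x])) = 0 := by
  rw [← one_mul (f.coeff _), ← coeff_single_mul_mul, hf.eq]
  refine coeff_mul_single_of_forall_mul_ne _ _ fun d hd => hx ?_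
  have := congrArg (fun w => (toList w).getLast?) hd
  simp only [toList_mul, toList_of, toList_ofList, List.getLast?_concat,
    List.singleton_append] at this
  rw [← List.cons_append, List.getLast?_concat] at this
  exact (Option.some.inj this).symm

theorem coeff_ofList_concat_append_replicate_eq_zero
    (hf : Commute (single (FreeMonoid.of a) 1) f) {x : X} (hx : x ≠ a) (n : ℕ) (u : List X) :
    f.coeff (ofList (u ++ [x] ++ List.replicate n a)) = 0 := by
  induction n generalizing u with
  | zero => simpa using coeff_ofList_concat_eq_zero hf hx u
  | succ n ih =>
    rw [List.replicate_succ', ← List.append_assoc, ofList_append, ofList_singleton,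
      coeff_mul_of_eq_coeff_of_mul hf, ← ofList_singleton, ← ofList_append]
    exact ih (a :: u)

theorem coeff_ofList_eq_zero_of_commute (hf : Commute (single (FreeMonoid.of a) 1) f) {l : List X}
    (hl : ∀ n, l ≠ List.replicate n a) : f.coeff (ofList l) = 0 := by
  obtain ⟨n, rfl⟩ | ⟨u, x, n, hx, rfl⟩ := l.eq_replicate_or_eq_concat_append_replicate a
  · exact absurd rfl (hl n)
  · exact coeff_ofList_concat_append_replicate_eq_zero hf hx n u

end MonoidAlgebra

theorem FreeAlgebra.equivMonoidAlgebraFreeMonoid_ι {R X : Type*} [CommSemiring R] (x : X) :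
    equivMonoidAlgebraFreeMonoid (ι R x) = single (FreeMonoid.of x) 1 := by
  simp [equivMonoidAlgebraFreeMonoid]

theorem coeffWord_eq_coeff {X : Type*} (P : FreeAlgebra ℚ X) (w : FreeMonoid X) :
    coeffWord P w = (FreeAlgebra.equivMonoidAlgebraFreeMonoid P).coeff w := by
  simp [coeffWord, FreeAlgebra.basisFreeMonoid]

/-- Uniqueness of solutions of `[ι a, ·] = Q` among polynomials with no `a`-power terms. -/
theorem stmt_13 {X : Type*} (a : X) (P₁ P₂ : FreeAlgebra ℚ X)
    (h₁ : ∀ k : ℕ, coeffWord P₁ (FreeMonoid.ofList (List.replicate k a)) = 0)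
    (h₂ : ∀ k : ℕ, coeffWord P₂ (FreeMonoid.ofList (List.replicate k a)) = 0)
    (h : ⁅FreeAlgebra.ι ℚ a, P₁⁆ = ⁅FreeAlgebra.ι ℚ a, P₂⁆) :
    P₁ = P₂ := by
  let e := FreeAlgebra.equivMonoidAlgebraFreeMonoid (R := ℚ) (X := X)
  have hcomm : Commute (FreeAlgebra.ι ℚ a) (P₁ - P₂) :=
    commute_iff_lie_eq.2 <| by rw [lie_sub, h, sub_self]
  have hcomm' : Commute (single (FreeMonoid.of a) 1) (e (P₁ - P₂)) := by
    simpa only [e, FreeAlgebra.equivMonoidAlgebraFreeMonoid_ι] using hcomm.map e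
  refine sub_eq_zero.1 <| e.injective <| coeff_injective <| Finsupp.ext fun w => ?_
  rw [map_zero, coeff_zero, Finsupp.zero_apply, ← ofList_toList w]
  by_cases hw : ∃ n, w.toList = List.replicate n a
  · obtain ⟨n, hn⟩ := hw
    rw [hn, map_sub, coeff_sub, Finsupp.sub_apply, ← coeffWord_eq_coeff, ← coeffWord_eq_coeff,
      h₁, h₂, sub_zero]
  · exact coeff_ofList_eq_zero_of_commute hcomm' (not_exists.1 hw)
end
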